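/- Let I be an irreducible interval of a MinBudget instance (N, ⊴, c). Then every ideal J ⊆ I of the restricted order ⊴_I satisfies c(J) ≥ min{0, c(I)}. -/

import Mathlib

open List

variable {ι : Type*} [DecidableEq ι]

/-- Total cost of a schedule (list of jobs). -/
def listCost (c : ι → ℝ) (S : List ι) : ℝ := (S.map c).sum

/-- Budget of a schedule: maximum cost of a prefix (the empty prefix has cost 0). -/
def listBudget (c : ι → ℝ) : List ι → ℝ
  | [] => 0
  | j :: t => max 0 (c j + listBudget c t)

/-- Return of a schedule. -/
def listReturn (c : ι → ℝ) (S : List ι) : ℝ := listCost c S - listBudget c S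

/-- `S` enumerates the finite job set `N` without repetition. -/
def IsScheduleOf (N : Finset ι) (S : List ι) : Prop :=
  S.Nodup ∧ ∀ j, j ∈ S ↔ j ∈ N

/-- `S` is a linear extension of the precedence relation `r` (restricted to its jobs). -/
def RespectsOrder (r : ι → ι → Prop) (S : List ι) : Prop :=
  ∀ i j, r i j → i ∈ S → j ∈ S → S.idxOf i ≤ S.idxOf j

/-- Minimum budget over all feasible schedules of the job set `X`. -/
noncomputable def setBudget (r : ι → ι → Prop) (c : ι → ℝ) (X : Finset ι) : ℝ :=
  sInf {b | ∃ S : List ι, IsScheduleOf X S ∧ RespectsOrder r S ∧ listBudget c S = b}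

/-- Total cost of a job set. -/
def setCost (c : ι → ℝ) (X : Finset ι) : ℝ := ∑ j ∈ X, c j

/-- Return of a job set. -/
noncomputable def setReturn (r : ι → ι → Prop) (c : ι → ℝ) (X : Finset ι) : ℝ :=
  setCost c X - setBudget r c X

/-- The cbr-preorder on job sets. -/
def cbrLE (r : ι → ι → Prop) (c : ι → ℝ) (X Y : Finset ι) : Prop :=
  (setCost c X < 0 ∧ 0 ≤ setCost c Y) ∨
  (setCost c X < 0 ∧ setCost c Y < 0 ∧ setBudget r c X < setBudget r c Y) ∨
  (setCost c X < 0 ∧ setCost c Y < 0 ∧ setBudget r c X = setBudget r c Y ∧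
    setReturn r c X ≤ setReturn r c Y) ∨
  (0 ≤ setCost c X ∧ 0 ≤ setCost c Y ∧ setReturn r c X ≤ setReturn r c Y)

/-- `J` is an ideal (downward-closed subset) of `r` restricted to `I`. -/
def IsIdealIn (r : ι → ι → Prop) (I J : Finset ι) : Prop :=
  J ⊆ I ∧ ∀ j ∈ J, ∀ i ∈ I, r i j → i ∈ J

/-- `F` is a filter (upward-closed subset) of `r` restricted to `I`. -/
def IsFilterIn (r : ι → ι → Prop) (I F : Finset ι) : Prop :=
  F ⊆ I ∧ ∀ i ∈ F, ∀ j ∈ I, r i j → j ∈ F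

/-- `I` is an interval of `r` on `N`: intersection of an ideal and a filter. -/
def IsIntervalIn (r : ι → ι → Prop) (N I : Finset ι) : Prop :=
  ∃ J F, IsIdealIn r N J ∧ IsFilterIn r N F ∧ I = J ∩ F

/-- An irreducible interval: every ideal of the restricted order is `⪰` the interval. -/
def IsIrreducibleIn (r : ι → ι → Prop) (c : ι → ℝ) (N I : Finset ι) : Prop :=
  IsIntervalIn r N I ∧ ∀ J, IsIdealIn r I J → cbrLE r c I J

/-- A schedule (given as blocks `SS`) in increasing irreducible structure. -/
def IncIrrStructure (r : ι → ι → Prop) (c : ι → ℝ) (N : Finset ι)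
    (SS : List (List ι)) : Prop :=
  IsScheduleOf N SS.flatten ∧ RespectsOrder r SS.flatten ∧
  (∀ S ∈ SS, IsIrreducibleIn r c N S.toFinset ∧ RespectsOrder r S ∧
    listBudget c S = setBudget r c S.toFinset) ∧
  ∀ i j : Fin SS.length, i < j → cbrLE r c (SS.get i).toFinset (SS.get j).toFinset

/-!
If `c(I) ≥ 0`, then `I ⪯ J` forces `c(J) ≥ 0`. If `c(I) < 0`, let `K` be an ideal of `I` of
minimum cost. For every prefix `Q` of a feasible schedule of `I`, `Q ∪ K` is again an ideal, so
`c(Q ∩ K) = c(Q) + c(K) - c(Q ∪ K) ≤ c(Q)`: restricting the schedule to `K` does not raise its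
budget, whence `b(K) ≤ b(I)`. Now `I ⪯ K` with `c(I), c(K) < 0` and `b(K) ≤ b(I)` leaves only
`b(I) = b(K)` and `r(I) ≤ r(K)`, i.e. `c(I) ≤ c(K) ≤ c(J)`.
-/

lemma List.exists_prefix_filter_eq_of_prefix_filter {α : Type*} {p : α → Bool} {P S : List α}
    (h : P <+: S.filter p) : ∃ Q, Q <+: S ∧ Q.filter p = P := by
  induction S generalizing P with
  | nil => exact ⟨[], List.prefix_refl _, (List.prefix_nil.mp h).symm⟩
  | cons x S ih =>
    by_cases hx : p x
    · rw [List.filter_cons_of_pos hx] at h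
      cases P with
      | nil => exact ⟨[], List.nil_prefix, rfl⟩
      | cons y P =>
        obtain ⟨rfl, hP⟩ := List.cons_prefix_cons.mp h
        obtain ⟨Q, hQ, rfl⟩ := ih hP
        exact ⟨y :: Q, List.cons_prefix_cons.mpr ⟨rfl, hQ⟩, List.filter_cons_of_pos hx⟩
    · rw [List.filter_cons_of_neg hx] at h
      obtain ⟨Q, hQ, rfl⟩ := ih h
      exact ⟨x :: Q, List.cons_prefix_cons.mpr ⟨rfl, hQ⟩, List.filter_cons_of_neg hx⟩

section Budget

omit [DecidableEq ι]

variable (c : ι → ℝ)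

lemma listCost_cons (x : ι) (S : List ι) : listCost c (x :: S) = c x + listCost c S := by
  simp [listCost]

lemma listBudget_nonneg (S : List ι) : 0 ≤ listBudget c S := by
  cases S <;> simp [listBudget]

lemma listCost_le_listBudget_of_prefix {P S : List ι} (h : P <+: S) :
    listCost c P ≤ listBudget c S := by
  induction S generalizing P with
  | nil => simp [List.prefix_nil.mp h, listCost, listBudget]
  | cons x S ih =>
    cases P with
    | nil => simpa [listCost] using listBudget_nonneg c (x :: S)
    | cons y P =>
      obtain ⟨rfl, hP⟩ := List.cons_prefix_cons.mp h
      rw [listCost_cons, listBudget]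
      exact le_max_of_le_right (by linarith [ih hP])

lemma listBudget_le_of_forall_prefix {S : List ι} {B : ℝ} (hB : 0 ≤ B)
    (h : ∀ P, P <+: S → listCost c P ≤ B) : listBudget c S ≤ B := by
  induction S generalizing B with
  | nil => simpa [listBudget]
  | cons x S ih =>
    have hx : c x ≤ B := by simpa [listCost] using h [x] (List.prefix_append [x] S)
    have hS : listBudget c S ≤ B - c x := by
      refine ih (by linarith) fun P hP => ?_
      have := h (x :: P) (List.cons_prefix_cons.mpr ⟨rfl, hP⟩)
      rw [listCost_cons] at this
      linarith
    exact max_le hB (by linarith)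

end Budget

lemma listCost_eq_setCost (c : ι → ℝ) {S : List ι} (hS : S.Nodup) :
    listCost c S = setCost c S.toFinset :=
  (List.sum_toFinset c hS).symm

section Schedules

variable {r : ι → ι → Prop}

lemma respectsOrder_cons_iff {x : ι} {S : List ι} (hx : x ∉ S) :
    RespectsOrder r (x :: S) ↔ RespectsOrder r S ∧ ∀ y ∈ S, ¬ r y x := by
  have hidx : ∀ y ∈ S, (x :: S).idxOf y = S.idxOf y + 1 := fun y hy =>
    List.idxOf_cons_ne S fun h => hx (h ▸ hy)
  constructor
  · intro h
    refine ⟨fun i j hij hi hj => ?_, fun y hy hyx => ?_⟩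
    · have := h i j hij (.tail x hi) (.tail x hj)
      rw [hidx i hi, hidx j hj] at this
      omega
    · have := h y x hyx (.tail x hy) (.head S)
      rw [hidx y hy, List.idxOf_cons_self] at this
      omega
  · rintro ⟨h, hS⟩ i j hij hi hj
    rcases List.mem_cons.mp hi with rfl | hiS
    · simp
    rcases List.mem_cons.mp hj with rfl | hjS
    · exact absurd hij (hS i hiS)
    rw [hidx i hiS, hidx j hjS]
    exact Nat.succ_le_succ (h i j hij hiS hjS)

lemma RespectsOrder.filter {S : List ι} (hS : S.Nodup) (h : RespectsOrder r S) (p : ι → Bool) :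
    RespectsOrder r (S.filter p) := by
  induction S with
  | nil => exact h
  | cons x S ih =>
    obtain ⟨hxS, hS⟩ := List.nodup_cons.mp hS
    obtain ⟨hr, hx⟩ := (respectsOrder_cons_iff hxS).mp h
    by_cases hpx : p x
    · rw [List.filter_cons_of_pos hpx,
        respectsOrder_cons_iff fun h => hxS (List.mem_of_mem_filter h)]
      exact ⟨ih hS hr, fun y hy => hx y (List.mem_of_mem_filter hy)⟩
    · rw [List.filter_cons_of_neg hpx]
      exact ih hS hr

lemma IsIdealIn.union {I A B : Finset ι} (hA : IsIdealIn r I A) (hB : IsIdealIn r I B) :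
    IsIdealIn r I (A ∪ B) := by
  refine ⟨Finset.union_subset hA.1 hB.1, fun j hj i hi hij => ?_⟩
  rcases Finset.mem_union.mp hj with hj | hj
  · exact Finset.mem_union_left _ (hA.2 j hj i hi hij)
  · exact Finset.mem_union_right _ (hB.2 j hj i hi hij)

lemma isIdealIn_toFinset_of_prefix {I : Finset ι} {S Q : List ι} (hS : IsScheduleOf I S)
    (hr : RespectsOrder r S) (hQ : Q <+: S) : IsIdealIn r I Q.toFinset := by
  refine ⟨fun a ha => (hS.2 a).mp (hQ.subset (List.mem_toFinset.mp ha)),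
    fun j hj i hi hij => ?_⟩
  rw [List.mem_toFinset] at hj ⊢
  have hjS := hQ.subset hj
  rw [hQ.mem_iff_idxOf_lt_length] at hj ⊢
  exact (hr i j hij ((hS.2 i).mpr hi) hjS).trans_lt hj

omit [DecidableEq ι] in
lemma exists_minimal_of_isPartialOrder [IsPartialOrder ι r] {X : Finset ι} (hX : X.Nonempty) :
    ∃ x ∈ X, ∀ y ∈ X, r y x → y = x := by
  let _ : Preorder ι := { le := r, le_refl := refl_of r, le_trans := fun _ _ _ => trans_of r }
  obtain ⟨x, hxX, hx⟩ := X.exists_minimal hX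
  exact ⟨x, hxX, fun y hy hyx => antisymm hyx (hx hy hyx)⟩

lemma exists_schedule [IsPartialOrder ι r] (X : Finset ι) :
    ∃ S, IsScheduleOf X S ∧ RespectsOrder r S := by
  induction X using Finset.strongInduction with
  | _ X ih =>
    rcases X.eq_empty_or_nonempty with rfl | hX
    · exact ⟨[], ⟨List.nodup_nil, by simp⟩, fun i j _ hi => absurd hi List.not_mem_nil⟩
    obtain ⟨x, hxX, hx⟩ := exists_minimal_of_isPartialOrder (r := r) hX
    obtain ⟨S, ⟨hnd, hmem⟩, hr⟩ := ih (X.erase x) (Finset.erase_ssubset hxX)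
    have hxS : x ∉ S := fun h => by simpa using (hmem x).mp h
    refine ⟨x :: S, ⟨List.nodup_cons.mpr ⟨hxS, hnd⟩, fun j => ?_⟩, ?_⟩
    · by_cases hj : j = x <;> simp [hj, hmem, hxX]
    · refine (respectsOrder_cons_iff hxS).mpr ⟨hr, fun y hy hyx => ?_⟩
      obtain ⟨hyx', hyX⟩ := Finset.mem_erase.mp ((hmem y).mp hy)
      exact hyx' (hx y hyX hyx)

end Schedules

omit [DecidableEq ι] in
lemma exists_isIdealIn_forall_setCost_le (r : ι → ι → Prop) (c : ι → ℝ) (I : Finset ι) :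
    ∃ K, IsIdealIn r I K ∧ ∀ J, IsIdealIn r I J → setCost c K ≤ setCost c J := by
  classical
  obtain ⟨K, hK, hKmin⟩ := (I.powerset.filter (IsIdealIn r I)).exists_min_image (setCost c)
    ⟨∅, Finset.mem_filter.mpr ⟨Finset.empty_mem_powerset I, Finset.empty_subset I,
      by simp⟩⟩
  exact ⟨K, (Finset.mem_filter.mp hK).2,
    fun J hJ => hKmin J (Finset.mem_filter.mpr ⟨Finset.mem_powerset.mpr hJ.1, hJ⟩)⟩

section MinimumCostIdeal

variable {r : ι → ι → Prop} {c : ι → ℝ} {I K : Finset ι}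

lemma listBudget_filter_le_of_forall_setCost_le {S : List ι} (hS : IsScheduleOf I S)
    (hr : RespectsOrder r S) (hK : IsIdealIn r I K)
    (hKmin : ∀ J, IsIdealIn r I J → setCost c K ≤ setCost c J) :
    listBudget c (S.filter (· ∈ K)) ≤ listBudget c S := by
  refine listBudget_le_of_forall_prefix c (listBudget_nonneg c S) fun P hP => ?_
  obtain ⟨Q, hQ, rfl⟩ := List.exists_prefix_filter_eq_of_prefix_filter hP
  have hQnd : Q.Nodup := hS.1.sublist hQ.sublist
  have hQK : (Q.filter (· ∈ K)).toFinset = Q.toFinset ∩ K := by ext; simp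
  have hunion : setCost c K ≤ setCost c (Q.toFinset ∪ K) :=
    hKmin _ ((isIdealIn_toFinset_of_prefix hS hr hQ).union hK)
  have hmod : setCost c (Q.toFinset ∪ K) + setCost c (Q.toFinset ∩ K) =
      setCost c Q.toFinset + setCost c K := Finset.sum_union_inter
  calc listCost c (Q.filter (· ∈ K)) = setCost c (Q.toFinset ∩ K) := by
        rw [listCost_eq_setCost c (hQnd.filter _), hQK]
    _ ≤ setCost c Q.toFinset := by linarith
    _ = listCost c Q := (listCost_eq_setCost c hQnd).symm
    _ ≤ listBudget c S := listCost_le_listBudget_of_prefix c hQ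

lemma setBudget_le_listBudget {X : Finset ι} {S : List ι} (hS : IsScheduleOf X S)
    (hr : RespectsOrder r S) : setBudget r c X ≤ listBudget c S :=
  csInf_le ⟨0, by rintro _ ⟨T, -, -, rfl⟩; exact listBudget_nonneg c T⟩ ⟨S, hS, hr, rfl⟩

lemma setBudget_le_of_forall_setCost_le [IsPartialOrder ι r] (hK : IsIdealIn r I K)
    (hKmin : ∀ J, IsIdealIn r I J → setCost c K ≤ setCost c J) :
    setBudget r c K ≤ setBudget r c I := by
  obtain ⟨S₀, hS₀, hr₀⟩ := exists_schedule (r := r) I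
  refine le_csInf ⟨_, S₀, hS₀, hr₀, rfl⟩ ?_
  rintro _ ⟨S, hS, hr, rfl⟩
  have hSK : IsScheduleOf K (S.filter (· ∈ K)) :=
    ⟨hS.1.filter _, fun j => by simpa using fun hj => (hS.2 j).mpr (hK.1 hj)⟩
  exact (setBudget_le_listBudget hSK (hr.filter hS.1 _)).trans
    (listBudget_filter_le_of_forall_setCost_le hS hr hK hKmin)

end MinimumCostIdeal

section CbrPreorder

variable {r : ι → ι → Prop} {c : ι → ℝ} {X Y : Finset ι}

lemma cbrLE.setCost_nonneg (h : cbrLE r c X Y) (hX : 0 ≤ setCost c X) : 0 ≤ setCost c Y := by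
  rcases h with ⟨h, -⟩ | ⟨h, -⟩ | ⟨h, -⟩ | ⟨-, h, -⟩ <;> linarith

lemma cbrLE.setCost_le_of_setBudget_le (h : cbrLE r c X Y) (hX : setCost c X < 0)
    (hb : setBudget r c Y ≤ setBudget r c X) : setCost c X ≤ setCost c Y := by
  rcases h with ⟨-, hY⟩ | ⟨-, -, hb'⟩ | ⟨-, -, hb', hret⟩ | ⟨hX', -⟩
  · linarith
  · linarith
  · unfold setReturn at hret
    linarith
  · linarith

end CbrPreorder

theorem irreducible_ideal_cost (r : ι → ι → Prop) (hr : IsPartialOrder ι r)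
    (c : ι → ℝ) (N I : Finset ι) (hI : IsIrreducibleIn r c N I) :
    ∀ J, IsIdealIn r I J → min 0 (setCost c I) ≤ setCost c J := by
  intro J hJ
  rcases lt_or_ge (setCost c I) 0 with hneg | hnonneg
  · obtain ⟨K, hK, hKmin⟩ := exists_isIdealIn_forall_setCost_le r c I
    calc min 0 (setCost c I) ≤ setCost c I := min_le_right _ _
      _ ≤ setCost c K :=
        (hI.2 K hK).setCost_le_of_setBudget_le hneg (setBudget_le_of_forall_setCost_le hK hKmin)
      _ ≤ setCost c J := hKmin J hJ
  · exact (min_le_left _ _).trans ((hI.2 J hJ).setCost_nonneg hnonneg)
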